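/- arXiv:math/0612597 — 2 statements merged into one kernel-verified Lean document; each statement's English description precedes it below -/
import Mathlib

section
/- Let Ω ⊂ ℝ^N be open and bounded, K ⊂ ℝ^N compact convex with 0 ∈ int K, ρ its gauge, and ρ⁰ the gauge of the polar set K⁰. A Lipschitz function u on Ω satisfies Du ∈ K a.e. in Ω if and only if u(x) − u(y) ≤ ρ⁰(x − y) for every pair x, y ∈ Ω joined by a segment contained in Ω. -/
/-!
(⇒) Extend `u` to a Lipschitz `w` on the whole space and mollify: `φ ⋆ w` is differentiable
with derivative `φ ⋆ Dw`, an average of values of `Dw` near the segment `[y, x]`. Since every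
`p ∈ K` satisfies `⟪p, x - y⟫ ≤ ρ⁰(x - y)`, so does this average, and the mean value theorem
gives `(φ ⋆ w) x - (φ ⋆ w) y ≤ ρ⁰(x - y)`; letting the support of `φ` shrink gives the claim.

(⇐) At a point of differentiability `p`, the one-sided difference quotients along short
segments `[p, p + t v]` give `⟪∇u p, v⟫ ≤ ρ⁰(v)` for every `v`, and by Hahn–Banach separation
a vector with this property lies in the closed convex set `K ∋ 0`.
-/

open MeasureTheory Set RealInnerProductSpace

open scoped NNReal
/-- The polar set `K⁰ = {p : ⟪p,x⟫ ≤ 1 ∀ x ∈ K}`. -/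
def polarSet {N : ℕ} (K : Set (EuclideanSpace ℝ (Fin N))) : Set (EuclideanSpace ℝ (Fin N)) :=
  {p | ∀ x ∈ K, ⟪p, x⟫ ≤ 1}

open Filter Metric ContinuousLinearMap Topology
open scoped Convolution

section Mollify

variable {E : Type*} [NormedAddCommGroup E] [NormedSpace ℝ E] [FiniteDimensional ℝ E]
  [MeasurableSpace E] [BorelSpace E] {μ : Measure E} [μ.IsAddHaarMeasure]
  {f : E → ℝ} {C : ℝ≥0}

theorem LipschitzWith.locallyIntegrable_fderiv (hf : LipschitzWith C f) :
    LocallyIntegrable (fderiv ℝ f) μ :=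
  (locallyIntegrable_const (C : ℝ)).mono (measurable_fderiv ℝ f).aestronglyMeasurable
    (Eventually.of_forall fun _ => by
      simpa using norm_fderiv_le_of_lipschitz ℝ hf)

theorem LipschitzWith.locallyIntegrable_fderiv_apply (hf : LipschitzWith C f) (v : E) :
    LocallyIntegrable (fun p => fderiv ℝ f p v) μ := by
  refine (locallyIntegrable_const (C * ‖v‖)).mono
    (measurable_fderiv_apply_const ℝ f v).aestronglyMeasurable (Eventually.of_forall ?_)
  intro p
  calc ‖fderiv ℝ f p v‖ ≤ ‖fderiv ℝ f p‖ * ‖v‖ := le_opNorm _ v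
    _ ≤ C * ‖v‖ := by gcongr; exact norm_fderiv_le_of_lipschitz ℝ hf
    _ = ‖(C : ℝ) * ‖v‖‖ := by rw [Real.norm_of_nonneg (by positivity)]

theorem LipschitzWith.hasFDerivAt_normed_convolution (hf : LipschitzWith C f)
    (φ : ContDiffBump (0 : E)) (z : E) :
    HasFDerivAt (φ.normed μ ⋆[lsmul ℝ ℝ, μ] f) ((φ.normed μ ⋆[lsmul ℝ ℝ, μ] fderiv ℝ f) z) z := by
  have hlip : ∀ s, LipschitzWith (C * ‖φ.normed μ s‖₊) fun x => φ.normed μ s • f (x - s) :=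
    fun s => by
      simpa [mul_comm, Function.comp_def] using
        (lipschitzWith_smul (φ.normed μ s)).comp
          (hf.comp (IsometryEquiv.subRight s).isometry.lipschitz)
  have hdiff : ∀ᵐ s ∂μ, HasFDerivAt (fun x => φ.normed μ s • f (x - s))
      (φ.normed μ s • fderiv ℝ f (z - s)) z := by
    filter_upwards [(Measure.measurePreserving_sub_left μ z).quasiMeasurePreserving.ae
      hf.ae_differentiableAt] with s hs
    have h : HasFDerivAt (fun x => f (x - s)) (fderiv ℝ f (z - s)) z := by
      simpa [Function.comp_def] using hs.hasFDerivAt.comp z ((hasFDerivAt_id z).sub_const s)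
    exact h.const_smul (φ.normed μ s)
  simp only [convolution_def, lsmul_apply]
  refine (hasFDerivAt_integral_of_dominated_loc_of_lip (ball_mem_nhds z one_pos)
    (bound := fun s => C * φ.normed μ s) ?_ ?_ ?_ ?_ ?_ hdiff).2
  · exact Eventually.of_forall fun _ => (φ.continuous_normed.smul
      (hf.continuous.comp (continuous_const.sub continuous_id))).aestronglyMeasurable
  · exact ((φ.hasCompactSupport_normed.convolutionExists_left (lsmul ℝ ℝ) φ.continuous_normed
      hf.continuous.locallyIntegrable) z).integrable
  · exact ((φ.hasCompactSupport_normed.convolutionExists_left (lsmul ℝ ℝ) φ.continuous_normed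
      hf.locallyIntegrable_fderiv) z).integrable.aestronglyMeasurable
  · refine Eventually.of_forall fun s => ((hlip s).weaken ?_).lipschitzOnWith
    rw [← NNReal.coe_le_coe]
    simp [abs_of_nonneg (φ.nonneg_normed s)]
  · exact φ.integrable_normed.const_mul _

theorem ContDiffBump.normed_convolution_le_of_ae_le (φ : ContDiffBump (0 : E)) {g : E → ℝ}
    (hg : LocallyIntegrable g μ) {z : E} {M : ℝ} (hle : ∀ᵐ p ∂μ, p ∈ ball z φ.rOut → g p ≤ M) :
    (φ.normed μ ⋆[lsmul ℝ ℝ, μ] g) z ≤ M := by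
  have hint := ((φ.hasCompactSupport_normed (μ := μ)).convolutionExists_left (lsmul ℝ ℝ)
    φ.continuous_normed hg z).integrable
  have hpointwise : ∀ᵐ s ∂μ, φ.normed μ s • g (z - s) ≤ φ.normed μ s * M := by
    filter_upwards [(Measure.measurePreserving_sub_left μ z).quasiMeasurePreserving.ae hle]
      with s hs
    by_cases hsφ : s ∈ ball 0 φ.rOut
    · have hzs : z - s ∈ ball z φ.rOut := by simpa [dist_eq_norm] using hsφ
      exact mul_le_mul_of_nonneg_left (hs hzs) (φ.nonneg_normed s)
    · rw [← φ.support_normed_eq (μ := μ), Function.notMem_support] at hsφ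
      simp [hsφ]
  calc (φ.normed μ ⋆[lsmul ℝ ℝ, μ] g) z ≤ ∫ s, φ.normed μ s * M ∂μ :=
        integral_mono_ae hint (φ.integrable_normed.mul_const M) hpointwise
    _ = M := by rw [integral_mul_const, φ.integral_normed, one_mul]

theorem LipschitzWith.normed_convolution_sub_le (hf : LipschitzWith C f)
    (φ : ContDiffBump (0 : E)) {U : Set E} {x y : E} {M : ℝ}
    (hU : thickening φ.rOut (segment ℝ x y) ⊆ U)
    (h : ∀ᵐ p ∂μ, p ∈ U → fderiv ℝ f p (x - y) ≤ M) :
    (φ.normed μ ⋆[lsmul ℝ ℝ, μ] f) x - (φ.normed μ ⋆[lsmul ℝ ℝ, μ] f) y ≤ M := by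
  obtain ⟨z, hz, hmvt⟩ := domain_mvt
    (fun z _ => (hf.hasFDerivAt_normed_convolution (μ := μ) φ z).hasFDerivWithinAt)
    (convex_segment y x) (left_mem_segment ℝ y x) (right_mem_segment ℝ y x)
  have hderiv : (φ.normed μ ⋆[lsmul ℝ ℝ, μ] fderiv ℝ f) z (x - y)
      = (φ.normed μ ⋆[lsmul ℝ ℝ, μ] fun p => fderiv ℝ f p (x - y)) z := by
    rw [convolution_def, convolution_def, ContinuousLinearMap.integral_apply
      (((φ.hasCompactSupport_normed (μ := μ)).convolutionExists_left (lsmul ℝ ℝ)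
        φ.continuous_normed hf.locallyIntegrable_fderiv) z).integrable]
    rfl
  rw [hmvt, hderiv]
  refine φ.normed_convolution_le_of_ae_le ?_ ?_
  · exact hf.locallyIntegrable_fderiv_apply _
  · filter_upwards [h] with p hp hpz
    rw [segment_symm] at hz
    exact hp (hU (ball_subset_thickening hz _ hpz))

theorem LipschitzWith.dist_normed_convolution_le (hf : LipschitzWith C f)
    (φ : ContDiffBump (0 : E)) (z : E) :
    dist ((φ.normed μ ⋆[lsmul ℝ ℝ, μ] f) z) (f z) ≤ C * φ.rOut :=
  φ.dist_normed_convolution_le hf.continuous.aestronglyMeasurable fun p hp =>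
    (hf.dist_le_mul p z).trans (by gcongr; exact (mem_ball.1 hp).le)

theorem LipschitzWith.sub_le_of_ae_fderiv_apply_le (hf : LipschitzWith C f) {U : Set E}
    (hU : IsOpen U) {x y : E} (hxy : segment ℝ x y ⊆ U) {M : ℝ}
    (h : ∀ᵐ p ∂μ, p ∈ U → fderiv ℝ f p (x - y) ≤ M) : f x - f y ≤ M := by
  have hseg : IsCompact (segment ℝ x y) := by
    rw [segment_eq_image]; exact isCompact_Icc.image (by fun_prop)
  obtain ⟨δ, hδ, hthick⟩ := hseg.exists_thickening_subset_open hU hxy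
  have happrox : ∀ ε ∈ Ioo 0 δ, f x - f y ≤ M + 2 * C * ε := by
    rintro ε ⟨hε, hεδ⟩
    let φ : ContDiffBump (0 : E) := ⟨ε / 2, ε, half_pos hε, half_lt_self hε⟩
    have hφ := hf.normed_convolution_sub_le φ ((thickening_mono hεδ.le _).trans hthick) h
    have hx := hf.dist_normed_convolution_le (μ := μ) φ x
    have hy := hf.dist_normed_convolution_le (μ := μ) φ y
    rw [Real.dist_eq, abs_le] at hx hy
    linarith [hx.1, hy.2]
  have hlim : Tendsto (fun ε => M + 2 * C * ε) (𝓝[>] 0) (𝓝 M) :=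
    tendsto_nhdsWithin_of_tendsto_nhds
      ((by fun_prop : Continuous fun ε : ℝ => M + 2 * C * ε).tendsto' 0 M (by simp))
  exact ge_of_tendsto hlim (eventually_of_mem (Ioo_mem_nhdsGT hδ) happrox)

end Mollify

section Directional

variable {E : Type*} [NormedAddCommGroup E] [NormedSpace ℝ E]

theorem HasFDerivAt.apply_le_of_eventually_sub_le {f : E → ℝ} {f' : E →L[ℝ] ℝ} {p : E}
    (hf : HasFDerivAt f f' p) (v : E) {c : ℝ}
    (h : ∀ᶠ t in 𝓝[>] (0 : ℝ), f (p + t • v) - f p ≤ t * c) : f' v ≤ c := by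
  have hline : HasDerivAt (fun t : ℝ => f (p + t • v)) (f' v) 0 := by
    have := ((hasDerivAt_id (0 : ℝ)).smul_const v).const_add p
    rw [one_smul] at this
    exact (by simpa using hf : HasFDerivAt f f' (p + (0 : ℝ) • v)).comp_hasDerivAt 0 this
  refine le_of_tendsto ((hasDerivAt_iff_tendsto_slope.1 hline).mono_left
    (nhdsWithin_mono 0 fun t (ht : t ∈ Ioi 0) => ht.ne')) ?_
  filter_upwards [h, self_mem_nhdsWithin] with t ht htpos
  rw [slope_def_field, div_le_iff₀ (by simpa using htpos)]
  simpa [mul_comm] using ht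

theorem IsOpen.eventually_segment_add_smul_subset {U : Set E} (hU : IsOpen U) {p : E}
    (hp : p ∈ U) (v : E) : ∀ᶠ t in 𝓝 (0 : ℝ), segment ℝ (p + t • v) p ⊆ U := by
  obtain ⟨r, hr, hball⟩ := Metric.isOpen_iff.1 hU p hp
  have hcont : Tendsto (fun t : ℝ => p + t • v) (𝓝 0) (𝓝 p) :=
    (by fun_prop : Continuous fun t : ℝ => p + t • v).tendsto' 0 p (by simp)
  filter_upwards [hcont (ball_mem_nhds p hr)] with t ht
  exact ((convex_ball p r).segment_subset ht (mem_ball_self hr)).trans hball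

end Directional

section Polar

variable {N : ℕ} {K : Set (EuclideanSpace ℝ (Fin N))}

theorem polarSet_mem_nhds_zero (hK : Bornology.IsBounded K) : polarSet K ∈ 𝓝 0 := by
  obtain ⟨R, hR0, hR⟩ := hK.exists_pos_norm_le
  refine mem_of_superset (ball_mem_nhds 0 (inv_pos.2 hR0)) fun p hp x hx => ?_
  rw [mem_ball_zero_iff] at hp
  calc ⟪p, x⟫ ≤ ‖p‖ * ‖x‖ := real_inner_le_norm p x
    _ ≤ R⁻¹ * R := by gcongr; exact hR x hx
    _ = 1 := inv_mul_cancel₀ hR0.ne'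

theorem inner_le_gauge_polarSet (hK : Bornology.IsBounded K) {p : EuclideanSpace ℝ (Fin N)}
    (hp : p ∈ K) (v : EuclideanSpace ℝ (Fin N)) : ⟪p, v⟫ ≤ gauge (polarSet K) v := by
  refine le_of_forall_gt fun a ha => ?_
  obtain ⟨b, hb, hba, q, hq, rfl⟩ :=
    exists_lt_of_gauge_lt (absorbent_nhds_zero (polarSet_mem_nhds_zero hK)) ha
  calc ⟪p, b • q⟫ = b * ⟪q, p⟫ := by rw [real_inner_smul_right, real_inner_comm]
    _ ≤ b * 1 := by gcongr; exact hq p hp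
    _ < a := by rwa [mul_one]

theorem mem_of_forall_inner_le_gauge_polarSet (hKconv : Convex ℝ K) (hKcl : IsClosed K)
    (hK0 : 0 ∈ K) {q : EuclideanSpace ℝ (Fin N)}
    (hq : ∀ v, ⟪q, v⟫ ≤ gauge (polarSet K) v) : q ∈ K := by
  by_contra hqK
  obtain ⟨f, c, hfK, hfq⟩ := geometric_hahn_banach_closed_point hKconv hKcl hqK
  set v := (InnerProductSpace.toDual ℝ _).symm f
  have hvf : ∀ x, ⟪v, x⟫ = f x := fun x => InnerProductSpace.toDual_symm_apply
  have hc : 0 < c := by simpa using hfK 0 hK0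
  have hv : gauge (polarSet K) v ≤ c := by
    refine gauge_le_of_mem hc.le ((mem_smul_set_iff_inv_smul_mem₀ hc.ne' _ _).2 fun x hx => ?_)
    rw [real_inner_smul_left, hvf, inv_mul_le_iff₀ hc, mul_one]
    exact (hfK x hx).le
  have hqv := hq v
  rw [real_inner_comm, hvf] at hqv
  linarith

theorem sub_le_gauge_polarSet_of_ae_gradient_mem (hK : Bornology.IsBounded K)
    {U : Set (EuclideanSpace ℝ (Fin N))} (hU : IsOpen U) {w : EuclideanSpace ℝ (Fin N) → ℝ}
    {C : ℝ≥0} (hw : LipschitzWith C w) (h : ∀ᵐ p, p ∈ U → gradient w p ∈ K)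
    {x y : EuclideanSpace ℝ (Fin N)} (hxy : segment ℝ x y ⊆ U) :
    w x - w y ≤ gauge (polarSet K) (x - y) := by
  refine hw.sub_le_of_ae_fderiv_apply_le (μ := volume) hU hxy ?_
  filter_upwards [h] with p hp hpU
  rw [← inner_gradient_left]
  exact inner_le_gauge_polarSet hK (hp hpU) _

theorem gradient_mem_of_sub_le_gauge_polarSet (hKconv : Convex ℝ K) (hKcl : IsClosed K)
    (hK0 : 0 ∈ K) {U : Set (EuclideanSpace ℝ (Fin N))} (hU : IsOpen U)
    {w : EuclideanSpace ℝ (Fin N) → ℝ}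
    (h : ∀ x ∈ U, ∀ y ∈ U, segment ℝ x y ⊆ U → w x - w y ≤ gauge (polarSet K) (x - y))
    {p : EuclideanSpace ℝ (Fin N)} (hp : p ∈ U) (hw : DifferentiableAt ℝ w p) :
    gradient w p ∈ K := by
  refine mem_of_forall_inner_le_gauge_polarSet hKconv hKcl hK0 fun v => ?_
  rw [inner_gradient_left]
  refine hw.hasFDerivAt.apply_le_of_eventually_sub_le v ?_
  filter_upwards [nhdsWithin_le_nhds (hU.eventually_segment_add_smul_subset hp v),
    self_mem_nhdsWithin] with t hseg ht
  have hstep := h _ (hseg (left_mem_segment ℝ _ _)) p hp hseg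
  rwa [add_sub_cancel_left, gauge_smul_of_nonneg (le_of_lt ht), smul_eq_mul] at hstep

end Polar

theorem lip_rho_characterization_general (N : ℕ) (Ω : Set (EuclideanSpace ℝ (Fin N)))
    (hΩopen : IsOpen Ω)
    (K : Set (EuclideanSpace ℝ (Fin N)))
    (hKcomp : IsCompact K) (hKconv : Convex ℝ K)
    (hK0 : (0 : EuclideanSpace ℝ (Fin N)) ∈ interior K)
    (u : EuclideanSpace ℝ (Fin N) → ℝ) (C : ℝ≥0) (hu : LipschitzOnWith C u Ω) :
    (∀ᵐ x ∂(volume.restrict Ω), gradient u x ∈ K) ↔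
      (∀ x ∈ Ω, ∀ y ∈ Ω, segment ℝ x y ⊆ Ω →
        u x - u y ≤ gauge (polarSet K) (x - y)) := by
  obtain ⟨w, hw, huw⟩ := hu.extend_real
  have hgrad : (∀ᵐ x ∂(volume.restrict Ω), gradient u x ∈ K) ↔
      ∀ᵐ x, x ∈ Ω → gradient w x ∈ K := by
    rw [ae_restrict_iff' hΩopen.measurableSet]
    refine eventually_congr (Eventually.of_forall fun p => imp_congr_right fun hp => ?_)
    have hloc : u =ᶠ[𝓝 p] w := eventually_of_mem (hΩopen.mem_nhds hp) huw
    rw [hloc.gradient_eq]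
  have hsub : (∀ x ∈ Ω, ∀ y ∈ Ω, segment ℝ x y ⊆ Ω → u x - u y ≤ gauge (polarSet K) (x - y)) ↔
      ∀ x ∈ Ω, ∀ y ∈ Ω, segment ℝ x y ⊆ Ω → w x - w y ≤ gauge (polarSet K) (x - y) :=
    forall₂_congr fun x hx => forall₂_congr fun y hy => by rw [huw hx, huw hy]
  rw [hgrad, hsub]
  refine ⟨fun h x _ y _ hxy =>
    sub_le_gauge_polarSet_of_ae_gradient_mem hKcomp.isBounded hΩopen hw h hxy, fun h => ?_⟩
  filter_upwards [hw.ae_differentiableAt (μ := volume)] with p hp hpΩ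
  exact gradient_mem_of_sub_le_gauge_polarSet hKconv hKcomp.isClosed (interior_subset hK0) hΩopen
    h hpΩ hp

/-- for `Ω ⊂ ℝ^N` open bounded, `K` compact convex with `0 ∈ int K`, a Lipschitz
function `u` on `Ω` satisfies `Du ∈ K` a.e. in `Ω` if and only if
`u(x) − u(y) ≤ ρ⁰(x − y)` for every `x, y ∈ Ω` joined by a segment contained in `Ω`,
where `ρ⁰` is the gauge of the polar set `K⁰`. -/
theorem lip_rho_characterization (N : ℕ) (Ω : Set (EuclideanSpace ℝ (Fin N)))
    (hΩopen : IsOpen Ω) (hΩbdd : Bornology.IsBounded Ω)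
    (K : Set (EuclideanSpace ℝ (Fin N)))
    (hKcomp : IsCompact K) (hKconv : Convex ℝ K)
    (hK0 : (0 : EuclideanSpace ℝ (Fin N)) ∈ interior K)
    (u : EuclideanSpace ℝ (Fin N) → ℝ) (C : ℝ≥0) (hu : LipschitzOnWith C u Ω) :
    (∀ᵐ x ∂(volume.restrict Ω), gradient u x ∈ K) ↔
      (∀ x ∈ Ω, ∀ y ∈ Ω, segment ℝ x y ⊆ Ω →
        u x - u y ≤ gauge (polarSet K) (x - y)) :=
  lip_rho_characterization_general N Ω hΩopen K hKcomp hKconv hK0 u C hu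
end

section
/- Let ū ∈ Lip_ρ(Ω), and define Ω⁺ = {ū > d_Ω}, Ω⁻ = {ū < −d_Ω⁻}. Then the closures of Ω⁺ and Ω⁻ intersect only on ∂Ω, at points where ū = 0. Consequently, the function u = min(max(ū, −d_Ω⁻), d_Ω) equals d_Ω on Ω⁺, equals −d_Ω⁻ on Ω⁻, equals ū elsewhere, belongs to Lip_ρ(Ω), and vanishes on ∂Ω. -/
open MeasureTheory Set RealInnerProductSpace
open scoped NNReal

/-- `Ω` is a domain of class `C²`. -/
def IsC2Domain {N : ℕ} (Ω : Set (EuclideanSpace ℝ (Fin N))) : Prop :=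
  ∀ x ∈ frontier Ω, ∃ (U : Set (EuclideanSpace ℝ (Fin N))) (f : EuclideanSpace ℝ (Fin N) → ℝ),
    x ∈ U ∧ IsOpen U ∧ ContDiffOn ℝ 2 f U ∧ (∀ y ∈ U, fderivWithin ℝ f U y ≠ 0) ∧
    Ω ∩ U = {y ∈ U | f y < 0}

/-- The Minkowski distance from `∂Ω` induced by the gauge of `K⁰`. -/
noncomputable def mdist {N : ℕ} (K Ω : Set (EuclideanSpace ℝ (Fin N)))
    (x : EuclideanSpace ℝ (Fin N)) : ℝ :=
  sInf ((fun y => gauge (polarSet K) (x - y)) '' frontier Ω)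

/-- The Minkowski distance from `∂Ω` induced by the gauge of `−K⁰`. -/
noncomputable def mdistNeg {N : ℕ} (K Ω : Set (EuclideanSpace ℝ (Fin N)))
    (x : EuclideanSpace ℝ (Fin N)) : ℝ :=
  sInf ((fun y => gauge (polarSet K) (y - x)) '' frontier Ω)

section AuxLemmas


variable {N : ℕ}

theorem polarSet_convex (K : Set (EuclideanSpace ℝ (Fin N))) : Convex ℝ (polarSet K) := by
  intro p hp q hq a b ha hb hab
  intro x hx
  have h1 := hp x hx
  have h2 := hq x hx
  have : ⟪a • p + b • q, x⟫ = a * ⟪p, x⟫ + b * ⟪q, x⟫ := by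
    rw [inner_add_left, real_inner_smul_left, real_inner_smul_left]
  show ⟪a • p + b • q, x⟫ ≤ 1
  rw [this]
  nlinarith [mul_le_mul_of_nonneg_left h1 ha, mul_le_mul_of_nonneg_left h2 hb]

theorem polar_facts (K : Set (EuclideanSpace ℝ (Fin N))) (hKcomp : IsCompact K)
    (hK0 : (0 : EuclideanSpace ℝ (Fin N)) ∈ interior K) :
    ∃ c Cg : ℝ, 0 < c ∧ 0 < Cg ∧ Absorbent ℝ (polarSet K) ∧
      (∀ v, c * ‖v‖ ≤ gauge (polarSet K) v) ∧ (∀ v, gauge (polarSet K) v ≤ Cg * ‖v‖) := by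
  obtain ⟨R₀, hR₀⟩ := hKcomp.isBounded.subset_closedBall 0
  set R := max R₀ 1 with hRdef
  have hR1 : (1:ℝ) ≤ R := le_max_right _ _
  have hRpos : (0:ℝ) < R := lt_of_lt_of_le one_pos hR1
  have hKR : K ⊆ Metric.closedBall 0 R := hR₀.trans (Metric.closedBall_subset_closedBall (le_max_left _ _))
  -- small ball inside polar
  have hball : Metric.ball (0 : EuclideanSpace ℝ (Fin N)) R⁻¹ ⊆ polarSet K := by
    intro p hp x hx
    have hpn : ‖p‖ < R⁻¹ := by simpa [Metric.mem_ball, dist_eq_norm] using hp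
    have hxn : ‖x‖ ≤ R := by simpa [Metric.mem_closedBall, dist_eq_norm] using hKR hx
    calc ⟪p, x⟫ ≤ ‖p‖ * ‖x‖ := real_inner_le_norm p x
      _ ≤ R⁻¹ * R := by
          apply mul_le_mul hpn.le hxn (norm_nonneg _) (by positivity)
      _ = 1 := inv_mul_cancel₀ hRpos.ne'
  have habs : Absorbent ℝ (polarSet K) :=
    (absorbent_ball_zero (by positivity : (0:ℝ) < R⁻¹)).mono hball
  -- interior ball of K
  obtain ⟨r, hrpos, hrball⟩ : ∃ r > 0, Metric.ball (0 : EuclideanSpace ℝ (Fin N)) r ⊆ K := by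
    obtain ⟨r, hrpos, hr⟩ := Metric.mem_nhds_iff.1 (mem_interior_iff_mem_nhds.1 hK0)
    exact ⟨r, hrpos, hr⟩
  -- polar is bounded
  have hpolar_bdd : polarSet K ⊆ Metric.ball 0 (2 / r + 1) := by
    intro p hp
    rcases eq_or_ne p 0 with rfl | hpne
    · simp [Metric.mem_ball]; positivity
    · have hppos : (0:ℝ) < ‖p‖ := norm_pos_iff.2 hpne
      set x : EuclideanSpace ℝ (Fin N) := (r / 2) • ‖p‖⁻¹ • p with hxdef
      have hxnorm : ‖x‖ = r / 2 := by
        rw [hxdef, norm_smul, norm_smul, norm_inv, norm_norm,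
          inv_mul_cancel₀ hppos.ne', mul_one, Real.norm_eq_abs,
          abs_of_pos (by positivity : (0:ℝ) < r/2)]
      have hxmem : x ∈ K := by
        apply hrball
        rw [Metric.mem_ball, dist_zero_right, hxnorm]
        linarith
      have hle := hp x hxmem
      have hinner : ⟪p, x⟫ = (r / 2) * ‖p‖ := by
        rw [hxdef, real_inner_smul_right, real_inner_smul_right,
          real_inner_self_eq_norm_mul_norm]
        field_simp
      rw [hinner] at hle
      have : ‖p‖ ≤ 2 / r := by
        rw [le_div_iff₀ hrpos]
        nlinarith
      simp only [Metric.mem_ball, dist_zero_right]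
      linarith
  refine ⟨(2 / r + 1)⁻¹, R, by positivity, hRpos, habs, ?_, ?_⟩
  · intro v
    have h1 : gauge (Metric.ball (0 : EuclideanSpace ℝ (Fin N)) (2/r+1)) v ≤ gauge (polarSet K) v :=
      gauge_mono habs hpolar_bdd v
    rw [gauge_ball (by positivity) v] at h1
    calc (2/r+1)⁻¹ * ‖v‖ = ‖v‖ / (2/r+1) := by ring
      _ ≤ gauge (polarSet K) v := h1
  · intro v
    have h1 : gauge (polarSet K) v ≤ gauge (Metric.ball (0 : EuclideanSpace ℝ (Fin N)) R⁻¹) v :=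
      gauge_mono (absorbent_ball_zero (by positivity)) hball v
    rw [gauge_ball (by positivity) v] at h1
    calc gauge (polarSet K) v ≤ ‖v‖ / R⁻¹ := h1
      _ = R * ‖v‖ := by field_simp



variable {N : ℕ} (K Ω : Set (EuclideanSpace ℝ (Fin N)))

theorem gauge_img_bddBelow (f : EuclideanSpace ℝ (Fin N) → EuclideanSpace ℝ (Fin N)) :
    BddBelow ((fun y => gauge (polarSet K) (f y)) '' frontier Ω) := by
  refine ⟨0, ?_⟩
  rintro b ⟨z, hz, rfl⟩
  exact gauge_nonneg _

theorem mdist_nonneg' (hF : (frontier Ω).Nonempty) (x : EuclideanSpace ℝ (Fin N)) :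
    0 ≤ mdist K Ω x := by
  refine le_csInf (hF.image _) ?_
  rintro b ⟨z, hz, rfl⟩
  exact gauge_nonneg _

theorem mdistNeg_nonneg' (hF : (frontier Ω).Nonempty) (x : EuclideanSpace ℝ (Fin N)) :
    0 ≤ mdistNeg K Ω x := by
  refine le_csInf (hF.image _) ?_
  rintro b ⟨z, hz, rfl⟩
  exact gauge_nonneg _

theorem mdist_triangle' (hF : (frontier Ω).Nonempty) (habs : Absorbent ℝ (polarSet K))
    (hconv : Convex ℝ (polarSet K)) (x y : EuclideanSpace ℝ (Fin N)) :
    mdist K Ω x ≤ mdist K Ω y + gauge (polarSet K) (x - y) := by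
  have key : ∀ b ∈ (fun z => gauge (polarSet K) (y - z)) '' frontier Ω,
      mdist K Ω x - gauge (polarSet K) (x - y) ≤ b := by
    rintro b ⟨z, hz, rfl⟩
    have h1 : mdist K Ω x ≤ gauge (polarSet K) (x - z) :=
      csInf_le (gauge_img_bddBelow K Ω _) ⟨z, hz, rfl⟩
    have h2 : gauge (polarSet K) (x - z) ≤
        gauge (polarSet K) (x - y) + gauge (polarSet K) (y - z) := by
      have := gauge_add_le hconv habs (x - y) (y - z)
      simpa [sub_add_sub_cancel] using this
    simp only
    linarith
  have h := le_csInf (hF.image _) key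
  have h' : mdist K Ω x - gauge (polarSet K) (x - y) ≤ mdist K Ω y := h
  linarith

theorem mdistNeg_triangle' (hF : (frontier Ω).Nonempty) (habs : Absorbent ℝ (polarSet K))
    (hconv : Convex ℝ (polarSet K)) (x y : EuclideanSpace ℝ (Fin N)) :
    mdistNeg K Ω x ≤ mdistNeg K Ω y + gauge (polarSet K) (y - x) := by
  have key : ∀ b ∈ (fun z => gauge (polarSet K) (z - y)) '' frontier Ω,
      mdistNeg K Ω x - gauge (polarSet K) (y - x) ≤ b := by
    rintro b ⟨z, hz, rfl⟩
    have h1 : mdistNeg K Ω x ≤ gauge (polarSet K) (z - x) :=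
      csInf_le (gauge_img_bddBelow K Ω _) ⟨z, hz, rfl⟩
    have h2 : gauge (polarSet K) (z - x) ≤
        gauge (polarSet K) (z - y) + gauge (polarSet K) (y - x) := by
      have := gauge_add_le hconv habs (z - y) (y - x)
      simpa [sub_add_sub_cancel] using this
    simp only
    linarith
  have h : mdistNeg K Ω x - gauge (polarSet K) (y - x) ≤ mdistNeg K Ω y :=
    le_csInf (hF.image _) key
  linarith

theorem mdist_lipschitz' (hF : (frontier Ω).Nonempty) (habs : Absorbent ℝ (polarSet K))
    (hconv : Convex ℝ (polarSet K)) {Cg : ℝ} (hCg : 0 < Cg)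
    (hubd : ∀ v, gauge (polarSet K) v ≤ Cg * ‖v‖) :
    LipschitzWith (Real.toNNReal Cg) (mdist K Ω) := by
  apply LipschitzWith.of_dist_le_mul
  intro x y
  rw [Real.coe_toNNReal _ hCg.le, Real.dist_eq, abs_sub_le_iff, dist_eq_norm]
  constructor
  · have h1 := mdist_triangle' K Ω hF habs hconv x y
    have h2 := hubd (x - y)
    linarith
  · have h1 := mdist_triangle' K Ω hF habs hconv y x
    have h2 := hubd (y - x)
    rw [norm_sub_rev] at h2
    linarith

theorem mdistNeg_lipschitz' (hF : (frontier Ω).Nonempty) (habs : Absorbent ℝ (polarSet K))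
    (hconv : Convex ℝ (polarSet K)) {Cg : ℝ} (hCg : 0 < Cg)
    (hubd : ∀ v, gauge (polarSet K) v ≤ Cg * ‖v‖) :
    LipschitzWith (Real.toNNReal Cg) (mdistNeg K Ω) := by
  apply LipschitzWith.of_dist_le_mul
  intro x y
  rw [Real.coe_toNNReal _ hCg.le, Real.dist_eq, abs_sub_le_iff, dist_eq_norm]
  constructor
  · have h1 := mdistNeg_triangle' K Ω hF habs hconv x y
    have h2 := hubd (y - x)
    rw [norm_sub_rev] at h2
    linarith
  · have h1 := mdistNeg_triangle' K Ω hF habs hconv y x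
    have h2 := hubd (x - y)
    linarith

theorem mdist_frontier_zero (hF : (frontier Ω).Nonempty) {x : EuclideanSpace ℝ (Fin N)}
    (hx : x ∈ frontier Ω) : mdist K Ω x = 0 := by
  refine le_antisymm ?_ (mdist_nonneg' K Ω hF x)
  have h1 : mdist K Ω x ≤ gauge (polarSet K) (x - x) :=
    csInf_le (gauge_img_bddBelow K Ω _) ⟨x, hx, rfl⟩
  simpa [sub_self, gauge_zero] using h1

theorem mdistNeg_frontier_zero (hF : (frontier Ω).Nonempty) {x : EuclideanSpace ℝ (Fin N)}
    (hx : x ∈ frontier Ω) : mdistNeg K Ω x = 0 := by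
  refine le_antisymm ?_ (mdistNeg_nonneg' K Ω hF x)
  have h1 : mdistNeg K Ω x ≤ gauge (polarSet K) (x - x) :=
    csInf_le (gauge_img_bddBelow K Ω _) ⟨x, hx, rfl⟩
  simpa [sub_self, gauge_zero] using h1

theorem frontier_of_mdist_zero (hF : (frontier Ω).Nonempty) {c : ℝ} (hc : 0 < c)
    (hlb : ∀ v, c * ‖v‖ ≤ gauge (polarSet K) v) {x : EuclideanSpace ℝ (Fin N)}
    (hx0 : mdist K Ω x = 0) : x ∈ frontier Ω := by
  have key : c * Metric.infDist x (frontier Ω) ≤ mdist K Ω x := by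
    refine le_csInf (hF.image _) ?_
    rintro b ⟨z, hz, rfl⟩
    calc c * Metric.infDist x (frontier Ω) ≤ c * dist x z :=
          mul_le_mul_of_nonneg_left (Metric.infDist_le_dist_of_mem hz) hc.le
      _ = c * ‖x - z‖ := by rw [dist_eq_norm]
      _ ≤ gauge (polarSet K) (x - z) := hlb _
  rw [hx0] at key
  have h1 : Metric.infDist x (frontier Ω) ≤ 0 := by
    nlinarith [Metric.infDist_nonneg (x := x) (s := frontier Ω)]
  have h2 : Metric.infDist x (frontier Ω) = 0 :=
    le_antisymm h1 Metric.infDist_nonneg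
  exact (isClosed_frontier.mem_iff_infDist_zero hF).2 h2



variable {N : ℕ}

/-- one-sided bipolar: if `⟪p, v⟫ ≤ 1` for all `p` in the polar of a closed convex set
containing `0`, then `v ∈ K`. -/
theorem mem_of_forall_polar {K : Set (EuclideanSpace ℝ (Fin N))} (hKcomp : IsCompact K)
    (hKconv : Convex ℝ K) (hK0 : (0 : EuclideanSpace ℝ (Fin N)) ∈ K)
    {v : EuclideanSpace ℝ (Fin N)} (hv : ∀ p ∈ polarSet K, ⟪p, v⟫ ≤ 1) : v ∈ K := by
  by_contra hvK
  obtain ⟨φ, t, h1, h2⟩ := geometric_hahn_banach_closed_point hKconv hKcomp.isClosed hvK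
  have ht0 : 0 < t := by simpa using h1 0 hK0
  set p : EuclideanSpace ℝ (Fin N) :=
    t⁻¹ • ((InnerProductSpace.toDual ℝ (EuclideanSpace ℝ (Fin N))).symm φ) with hpdef
  have hinner : ∀ z : EuclideanSpace ℝ (Fin N), ⟪p, z⟫ = t⁻¹ * φ z := by
    intro z
    rw [hpdef, real_inner_smul_left, InnerProductSpace.toDual_symm_apply]
  have hpP : p ∈ polarSet K := by
    intro z hz
    rw [hinner]
    have := (h1 z hz).le
    calc t⁻¹ * φ z ≤ t⁻¹ * t := by
          apply mul_le_mul_of_nonneg_left this (by positivity)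
      _ = 1 := inv_mul_cancel₀ ht0.ne'
  have hcontra := hv p hpP
  rw [hinner] at hcontra
  have : t < t := by
    have h3 : t⁻¹ * φ v > t⁻¹ * t := by
      apply mul_lt_mul_of_pos_left h2 (by positivity)
    rw [inv_mul_cancel₀ ht0.ne'] at h3
    nlinarith
  exact lt_irrefl _ this

/-- if `f` is globally gauge-Lipschitz for the gauge of `polarSet K`, then its gradient
(junk value `0` included) lies in `K` everywhere. -/
theorem gradient_mem_of_gauge_lip {K : Set (EuclideanSpace ℝ (Fin N))} (hKcomp : IsCompact K)
    (hKconv : Convex ℝ K) (hK0 : (0 : EuclideanSpace ℝ (Fin N)) ∈ interior K)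
    {f : EuclideanSpace ℝ (Fin N) → ℝ}
    (hf : ∀ y z, f y - f z ≤ gauge (polarSet K) (y - z)) (x : EuclideanSpace ℝ (Fin N)) :
    gradient f x ∈ K := by
  have hgrad : gradient f x
      = (InnerProductSpace.toDual ℝ (EuclideanSpace ℝ (Fin N))).symm (fderiv ℝ f x) := rfl
  by_cases hdf : DifferentiableAt ℝ f x
  · apply mem_of_forall_polar hKcomp hKconv (interior_subset hK0)
    intro p hp
    have hinner : ⟪p, gradient f x⟫ = fderiv ℝ f x p := by
      rw [real_inner_comm, hgrad, InnerProductSpace.toDual_symm_apply]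
    rw [hinner]
    -- directional derivative bound
    have h1 : HasDerivAt (fun t : ℝ => x + t • p) p 0 := by
      simpa using ((hasDerivAt_id (0:ℝ)).smul_const p).const_add x
    have h2 : HasFDerivAt f (fderiv ℝ f x) (x + (0:ℝ) • p) := by
      simpa using hdf.hasFDerivAt
    have hder : HasDerivAt (fun t : ℝ => f (x + t • p)) (fderiv ℝ f x p) 0 :=
      h2.comp_hasDerivAt 0 h1
    have hslope : Filter.Tendsto (slope (fun t : ℝ => f (x + t • p)) 0) (nhdsWithin 0 (Set.Ioi 0))
        (nhds (fderiv ℝ f x p)) := by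
      refine (hasDerivAt_iff_tendsto_slope.1 hder).mono_left (nhdsWithin_mono _ ?_)
      intro t ht
      exact Set.mem_compl_singleton_iff.2 (ne_of_gt ht)
    have hev : ∀ᶠ t in nhdsWithin (0:ℝ) (Set.Ioi 0),
        slope (fun t : ℝ => f (x + t • p)) 0 t ≤ gauge (polarSet K) p := by
      filter_upwards [self_mem_nhdsWithin] with t ht
      have htpos : (0:ℝ) < t := ht
      have hfb : f (x + t • p) - f x ≤ gauge (polarSet K) (t • p) := by
        have := hf (x + t • p) x
        simpa [add_sub_cancel_left] using this
      have hgs : gauge (polarSet K) (t • p) = t * gauge (polarSet K) p := by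
        rw [gauge_smul_of_nonneg htpos.le]
        simp
      rw [slope_def_field]
      simp only [sub_zero, zero_smul, add_zero]
      rw [div_le_iff₀ htpos]
      rw [hgs] at hfb
      linarith
    have hlim : fderiv ℝ f x p ≤ gauge (polarSet K) p :=
      le_of_tendsto hslope hev
    exact hlim.trans (gauge_le_one_of_mem hp)
  · rw [hgrad, fderiv_zero_of_not_differentiableAt hdf, map_zero]
    exact interior_subset hK0

/-- if `f ≤ g` everywhere, with equality and differentiability at `x`, the derivatives agree. -/
theorem fderiv_eq_of_le_of_eq {f g : EuclideanSpace ℝ (Fin N) → ℝ} {x : EuclideanSpace ℝ (Fin N)}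
    (hle : ∀ y, f y ≤ g y) (heq : f x = g x)
    (hf : DifferentiableAt ℝ f x) (hg : DifferentiableAt ℝ g x) :
    fderiv ℝ f x = fderiv ℝ g x := by
  have hmin : IsLocalMin (fun y => g y - f y) x := by
    apply Filter.Eventually.of_forall
    intro y
    simp only
    have := hle y
    rw [heq]
    simp only [sub_self]
    linarith
  have h0 := hmin.fderiv_eq_zero
  have hsub : fderiv ℝ (fun y => g y - f y) x = fderiv ℝ g x - fderiv ℝ f x :=
    fderiv_sub hg hf
  rw [hsub] at h0
  exact (sub_eq_zero.1 h0).symm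


end AuxLemmas

/-- with `Ω⁺ = {ū > d_Ω}` and `Ω⁻ = {ū < −d_Ω⁻}`, the closures of `Ω⁺` and
`Ω⁻` meet only on `∂Ω`, at points where `ū = 0`; the truncation
`u = min(max(ū, −d_Ω⁻), d_Ω)` equals `d_Ω` on `Ω⁺`, `−d_Ω⁻` on `Ω⁻`, `ū` elsewhere in `Ω`,
belongs to `Lip_ρ(Ω)` and vanishes on `∂Ω`. -/
theorem truncation_properties (N : ℕ) (hN : 0 < N)
    (Ω : Set (EuclideanSpace ℝ (Fin N)))
    (hΩopen : IsOpen Ω) (hΩbdd : Bornology.IsBounded Ω) (hΩne : Ω.Nonempty)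
    (hΩC2 : IsC2Domain Ω)
    (K : Set (EuclideanSpace ℝ (Fin N)))
    (hKcomp : IsCompact K) (hKconv : Convex ℝ K)
    (hK0 : (0 : EuclideanSpace ℝ (Fin N)) ∈ interior K)
    (ub : EuclideanSpace ℝ (Fin N) → ℝ) (C : ℝ≥0)
    (hub : LipschitzOnWith C ub (closure Ω))
    (hubK : ∀ᵐ x ∂(volume.restrict Ω), gradient ub x ∈ K) :
    let Ωp : Set (EuclideanSpace ℝ (Fin N)) := {x ∈ Ω | mdist K Ω x < ub x}
    let Ωm : Set (EuclideanSpace ℝ (Fin N)) := {x ∈ Ω | ub x < -mdistNeg K Ω x}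
    let u : EuclideanSpace ℝ (Fin N) → ℝ :=
      fun x => min (max (ub x) (-mdistNeg K Ω x)) (mdist K Ω x)
    (closure Ωp ∩ closure Ωm ⊆ frontier Ω) ∧
    (∀ x ∈ closure Ωp ∩ closure Ωm, ub x = 0) ∧
    (∀ x ∈ Ωp, u x = mdist K Ω x) ∧
    (∀ x ∈ Ωm, u x = -mdistNeg K Ω x) ∧
    (∀ x ∈ Ω \ (Ωp ∪ Ωm), u x = ub x) ∧
    (∃ C' : ℝ≥0, LipschitzOnWith C' u (closure Ω)) ∧
    (∀ᵐ x ∂(volume.restrict Ω), gradient u x ∈ K) ∧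
    (∀ y ∈ frontier Ω, u y = 0) := by
  intro Ωp Ωm u
  classical
  obtain ⟨c, Cg, hc, hCg, habs, hlb, hubd⟩ := polar_facts K hKcomp hK0
  have hconv := polarSet_convex K
  have hnt : Nontrivial (EuclideanSpace ℝ (Fin N)) := by
    refine ⟨⟨EuclideanSpace.single ⟨0, hN⟩ (1:ℝ), 0, ?_⟩⟩
    intro h
    have h2 := congrArg (fun f => ‖f‖) h
    simp [EuclideanSpace.norm_single] at h2
  have hne_univ : Ω ≠ univ := by
    intro h
    exact NormedSpace.unbounded_univ ℝ (EuclideanSpace ℝ (Fin N)) (h ▸ hΩbdd)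
  have hFne : (frontier Ω).Nonempty := nonempty_frontier_iff.2 ⟨hΩne, hne_univ⟩
  have hd0 := mdist_nonneg' K Ω hFne
  have hdm0 := mdistNeg_nonneg' K Ω hFne
  have hdLip := mdist_lipschitz' K Ω hFne habs hconv hCg hubd
  have hdmLip := mdistNeg_lipschitz' K Ω hFne habs hconv hCg hubd
  -- closures
  have hclΩp : closure Ωp ⊆ closure Ω ∩ (fun x => ub x - mdist K Ω x) ⁻¹' Set.Ici 0 := by
    apply closure_minimal
    · rintro x ⟨hxΩ, hxlt⟩
      refine ⟨subset_closure hxΩ, ?_⟩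
      simp only [Set.mem_preimage, Set.mem_Ici]
      linarith
    · exact ContinuousOn.preimage_isClosed_of_isClosed
        (hub.continuousOn.sub hdLip.continuous.continuousOn) isClosed_closure isClosed_Ici
  have hclΩm : closure Ωm ⊆ closure Ω ∩ (fun x => -mdistNeg K Ω x - ub x) ⁻¹' Set.Ici 0 := by
    apply closure_minimal
    · rintro x ⟨hxΩ, hxlt⟩
      refine ⟨subset_closure hxΩ, ?_⟩
      simp only [Set.mem_preimage, Set.mem_Ici]
      linarith
    · exact ContinuousOn.preimage_isClosed_of_isClosed
        ((hdmLip.continuous.neg.continuousOn).sub hub.continuousOn) isClosed_closure isClosed_Ici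
  have hkey : ∀ x ∈ closure Ωp ∩ closure Ωm, mdist K Ω x = 0 ∧ ub x = 0 := by
    rintro x ⟨h1, h2⟩
    obtain ⟨-, hp⟩ := hclΩp h1
    obtain ⟨-, hm⟩ := hclΩm h2
    simp only [Set.mem_preimage, Set.mem_Ici] at hp hm
    constructor
    · have := hd0 x
      have := hdm0 x
      linarith
    · have := hd0 x
      have := hdm0 x
      linarith
  refine ⟨?_, ?_, ?_, ?_, ?_, ?_, ?_, ?_⟩
  · -- closures meet only on the frontier
    intro x hx
    exact frontier_of_mdist_zero K Ω hFne hc hlb (hkey x hx).1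
  · -- ub vanishes there
    intro x hx
    exact (hkey x hx).2
  · -- u = mdist on Ωp
    rintro x ⟨hxΩ, hxlt⟩
    show min (max (ub x) (-mdistNeg K Ω x)) (mdist K Ω x) = mdist K Ω x
    exact min_eq_right (le_trans hxlt.le (le_max_left _ _))
  · -- u = -mdistNeg on Ωm
    rintro x ⟨hxΩ, hxlt⟩
    show min (max (ub x) (-mdistNeg K Ω x)) (mdist K Ω x) = -mdistNeg K Ω x
    rw [max_eq_right hxlt.le]
    exact min_eq_left (le_trans (neg_nonpos.2 (hdm0 x)) (hd0 x))
  · -- u = ub elsewhere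
    rintro x ⟨hxΩ, hxn⟩
    have h1 : ¬ (mdist K Ω x < ub x) := fun h => hxn (Or.inl ⟨hxΩ, h⟩)
    have h2 : ¬ (ub x < -mdistNeg K Ω x) := fun h => hxn (Or.inr ⟨hxΩ, h⟩)
    push_neg at h1 h2
    show min (max (ub x) (-mdistNeg K Ω x)) (mdist K Ω x) = ub x
    rw [max_eq_left h2, min_eq_left h1]
  · -- Lipschitz
    obtain ⟨g, hgLip, hgEq⟩ := hub.extend_real
    have hnegLip : LipschitzWith (Real.toNNReal Cg) (fun z => -mdistNeg K Ω z) := by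
      apply LipschitzWith.of_dist_le_mul
      intro x y
      rw [dist_neg_neg]
      exact hdmLip.dist_le_mul x y
    have hU : LipschitzWith (max (max C (Real.toNNReal Cg)) (Real.toNNReal Cg))
        (fun z => min (max (g z) (-mdistNeg K Ω z)) (mdist K Ω z)) :=
      (hgLip.max hnegLip).min hdLip
    refine ⟨max (max C (Real.toNNReal Cg)) (Real.toNNReal Cg), fun x hx y hy => ?_⟩
    have ex : u x = min (max (g x) (-mdistNeg K Ω x)) (mdist K Ω x) := by
      show min (max (ub x) (-mdistNeg K Ω x)) (mdist K Ω x) = _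
      rw [hgEq hx]
    have ey : u y = min (max (g y) (-mdistNeg K Ω y)) (mdist K Ω y) := by
      show min (max (ub y) (-mdistNeg K Ω y)) (mdist K Ω y) = _
      rw [hgEq hy]
    rw [ex, ey]
    exact hU x y
  · -- gradient in K a.e.
    have hdDiff : ∀ᵐ x ∂(volume.restrict Ω), DifferentiableAt ℝ (mdist K Ω) x :=
      ae_restrict_of_ae (hdLip.ae_differentiableAt (μ := volume))
    have hdmDiff : ∀ᵐ x ∂(volume.restrict Ω), DifferentiableAt ℝ (mdistNeg K Ω) x :=
      ae_restrict_of_ae (hdmLip.ae_differentiableAt (μ := volume))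
    have hled : ∀ y, u y ≤ mdist K Ω y := fun y => min_le_right _ _
    have hledm : ∀ y, -mdistNeg K Ω y ≤ u y := fun y =>
      le_min (le_max_right _ _) (le_trans (neg_nonpos.2 (hdm0 y)) (hd0 y))
    filter_upwards [hubK, hdDiff, hdmDiff, ae_restrict_mem hΩopen.measurableSet]
      with x hK1 hd1 hdm1 hxΩ
    by_cases hudiff : DifferentiableAt ℝ u x
    · by_cases h1 : u x = mdist K Ω x
      · have hfeq := fderiv_eq_of_le_of_eq hled h1 hudiff hd1
        have hgr : gradient u x = gradient (mdist K Ω) x := by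
          show (InnerProductSpace.toDual ℝ (EuclideanSpace ℝ (Fin N))).symm (fderiv ℝ u x) = _
          rw [hfeq]
          rfl
        rw [hgr]
        refine gradient_mem_of_gauge_lip hKcomp hKconv hK0 (fun y z => ?_) x
        have h := mdist_triangle' K Ω hFne habs hconv y z
        linarith
      · by_cases h2 : u x = -mdistNeg K Ω x
        · have hfdiff : DifferentiableAt ℝ (fun y => -mdistNeg K Ω y) x := hdm1.neg
          have hfeq := fderiv_eq_of_le_of_eq hledm h2.symm hfdiff hudiff
          have hgr : gradient u x = gradient (fun y => -mdistNeg K Ω y) x := by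
            show (InnerProductSpace.toDual ℝ (EuclideanSpace ℝ (Fin N))).symm (fderiv ℝ u x) = _
            rw [← hfeq]
            rfl
          rw [hgr]
          refine gradient_mem_of_gauge_lip hKcomp hKconv hK0 (fun y z => ?_) x
          show -mdistNeg K Ω y - -mdistNeg K Ω z ≤ gauge (polarSet K) (y - z)
          have h := mdistNeg_triangle' K Ω hFne habs hconv z y
          linarith
        · have hlt1 : u x < mdist K Ω x := lt_of_le_of_ne (hled x) h1
          have hlt2 : -mdistNeg K Ω x < u x := lt_of_le_of_ne (hledm x) (Ne.symm h2)
          have hux : u x = max (ub x) (-mdistNeg K Ω x) := by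
            rcases min_choice (max (ub x) (-mdistNeg K Ω x)) (mdist K Ω x) with hc | hc
            · exact hc
            · exact absurd hc h1
          have hubx : ub x = u x := by
            rcases max_choice (ub x) (-mdistNeg K Ω x) with hc | hc
            · rw [hux, hc]
            · exfalso
              rw [hux, hc] at hlt2
              exact lt_irrefl _ hlt2
          have hclΩ : closure Ω ∈ nhds x :=
            Filter.mem_of_superset (hΩopen.mem_nhds hxΩ) subset_closure
          have hubCont : ContinuousAt ub x := hub.continuousOn.continuousAt hclΩ
          have hdCont : ContinuousAt (mdist K Ω) x := hdLip.continuous.continuousAt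
          have hdmCont : ContinuousAt (fun y => -mdistNeg K Ω y) x :=
            (hdmLip.continuous.neg).continuousAt
          have hev1 : ∀ᶠ y in nhds x, ub y < mdist K Ω y :=
            hubCont.eventually_lt hdCont (by rw [hubx]; exact hlt1)
          have hev2 : ∀ᶠ y in nhds x, -mdistNeg K Ω y < ub y :=
            hdmCont.eventually_lt hubCont (by rw [hubx]; exact hlt2)
          have heq : u =ᶠ[nhds x] ub := by
            filter_upwards [hev1, hev2] with y hy1 hy2
            show min (max (ub y) (-mdistNeg K Ω y)) (mdist K Ω y) = ub y
            rw [max_eq_left hy2.le, min_eq_left hy1.le]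
          have hgr : gradient u x = gradient ub x := by
            show (InnerProductSpace.toDual ℝ (EuclideanSpace ℝ (Fin N))).symm (fderiv ℝ u x) = _
            rw [heq.fderiv_eq]
            rfl
          rw [hgr]
          exact hK1
    · have hgr : gradient u x = 0 := by
        show (InnerProductSpace.toDual ℝ (EuclideanSpace ℝ (Fin N))).symm (fderiv ℝ u x) = 0
        rw [fderiv_zero_of_not_differentiableAt hudiff, map_zero]
      rw [hgr]
      exact interior_subset hK0
  · -- u vanishes on the frontier
    intro y hy
    show min (max (ub y) (-mdistNeg K Ω y)) (mdist K Ω y) = 0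
    rw [mdist_frontier_zero K Ω hFne hy, mdistNeg_frontier_zero K Ω hFne hy, neg_zero]
    exact min_eq_right (le_max_right _ _)
end
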